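/- arXiv:2504.20181 — 3 statements merged into one kernel-verified Lean document; each statement's English description precedes it below -/
import Mathlib

section
/- If u₁, u₂ are two solutions of u'' + V(t)u = 0 with Wronskian W = u₁u₂' - u₂u₁', then the function w(t) = √(a·u₁(t)² + 2b·u₁(t)u₂(t) + c·u₂(t)²), on any interval where the expression under the square root is positive, satisfies the Ermakov-Pinney equation w'' + V(t)w = w⁻³, provided ac - b² = W⁻². -/
/-!
Write `q = a u₁² + 2 b u₁ u₂ + c u₂²` as `B(u, u)` for the symmetric bilinear form `B` with
matrix `[[a, b], [b, c]]`, where `u = (u₁, u₂)`. Then `q' = 2 B(u, u')` and, by the equation,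
`B(u, u')' = B(u', u') - V q`. For `w = √q` this gives
`w'' + V w = (B(u, u) B(u', u') - B(u, u')²) / w³`, and the numerator is the Gram determinant
`(a c - b²) (u₁ u₂' - u₂ u₁')² = W⁻² W² = 1`.
-/

open Filter Topology

/-- The symmetric bilinear form on `ℝ²` with matrix `[[a, b], [b, c]]`. -/
def quadPolar (a b c x₁ y₁ x₂ y₂ : ℝ) : ℝ :=
  a * (x₁ * x₂) + b * (x₁ * y₂ + x₂ * y₁) + c * (y₁ * y₂)

section quadPolar

variable (a b c : ℝ)

theorem quadPolar_self (x y : ℝ) :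
    quadPolar a b c x y x y = a * x ^ 2 + 2 * b * x * y + c * y ^ 2 := by
  unfold quadPolar; ring

theorem quadPolar_self_mul_self_sub_sq (x y x' y' : ℝ) :
    quadPolar a b c x y x y * quadPolar a b c x' y' x' y' - quadPolar a b c x y x' y' ^ 2
      = (a * c - b ^ 2) * (x * y' - y * x') ^ 2 := by
  unfold quadPolar; ring

theorem HasDerivAt.quadPolar {x₁ y₁ x₂ y₂ : ℝ → ℝ} {x₁' y₁' x₂' y₂' t : ℝ}
    (hx₁ : HasDerivAt x₁ x₁' t) (hy₁ : HasDerivAt y₁ y₁' t)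
    (hx₂ : HasDerivAt x₂ x₂' t) (hy₂ : HasDerivAt y₂ y₂' t) :
    HasDerivAt (fun s => quadPolar a b c (x₁ s) (y₁ s) (x₂ s) (y₂ s))
      (quadPolar a b c x₁' y₁' (x₂ t) (y₂ t) + quadPolar a b c (x₁ t) (y₁ t) x₂' y₂') t := by
  unfold _root_.quadPolar
  refine ((((hx₁.mul hx₂).const_mul a).add
    (((hx₁.mul hy₂).add (hx₂.mul hy₁)).const_mul b)).add
    ((hy₁.mul hy₂).const_mul c)).congr_deriv ?_
  ring

end quadPolar

theorem hasDerivAt_deriv_sqrt {f g : ℝ → ℝ} {g' t : ℝ}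
    (hf : ∀ᶠ s in 𝓝 t, HasDerivAt f (2 * g s) s) (hg : HasDerivAt g g' t) (ht : 0 < f t) :
    HasDerivAt (deriv fun s => √(f s)) ((g' * f t - g t ^ 2) / √(f t) ^ 3) t := by
  have hne : √(f t) ≠ 0 := (Real.sqrt_pos.2 ht).ne'
  have hpos : ∀ᶠ s in 𝓝 t, 0 < f s :=
    hf.self_of_nhds.continuousAt.eventually (lt_mem_nhds ht)
  have hderiv : (deriv fun s => √(f s)) =ᶠ[𝓝 t] fun s => g s / √(f s) := by
    filter_upwards [hf, hpos] with s hfs hs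
    rw [(hfs.sqrt hs.ne').deriv]
    field_simp
  refine ((hg.div (hf.self_of_nhds.sqrt ht.ne') hne).congr_of_eventuallyEq hderiv).congr_deriv ?_
  field_simp
  rw [Real.sq_sqrt ht.le]

theorem ermakov_pinney_from_hill_solutions_general
    (V u₁ u₂ : ℝ → ℝ) (W a b c : ℝ)
    (hu₁ : Differentiable ℝ u₁) (hu₁' : Differentiable ℝ (deriv u₁))
    (hu₂ : Differentiable ℝ u₂) (hu₂' : Differentiable ℝ (deriv u₂))
    (hode₁ : ∀ t, deriv (deriv u₁) t + V t * u₁ t = 0)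
    (hode₂ : ∀ t, deriv (deriv u₂) t + V t * u₂ t = 0)
    (hW : ∀ t, u₁ t * deriv u₂ t - u₂ t * deriv u₁ t = W)
    (hWne : W ≠ 0)
    (habc : a * c - b ^ 2 = W⁻¹ ^ 2)
    (I : Set ℝ)
    (hpos : ∀ t ∈ I, 0 < a * u₁ t ^ 2 + 2 * b * u₁ t * u₂ t + c * u₂ t ^ 2)
    (w : ℝ → ℝ)
    (hw : ∀ t, w t = Real.sqrt (a * u₁ t ^ 2 + 2 * b * u₁ t * u₂ t + c * u₂ t ^ 2)) :
    ∀ t ∈ I, deriv (deriv w) t + V t * w t = (w t)⁻¹ ^ 3 := by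
  intro t ht
  set B := quadPolar a b c
  set q : ℝ → ℝ := fun s => B (u₁ s) (u₂ s) (u₁ s) (u₂ s)
  have hq_eq (s : ℝ) : q s = a * u₁ s ^ 2 + 2 * b * u₁ s * u₂ s + c * u₂ s ^ 2 :=
    quadPolar_self a b c _ _
  have hq (s : ℝ) : HasDerivAt q (2 * B (u₁ s) (u₂ s) (deriv u₁ s) (deriv u₂ s)) s := by
    convert (hu₁ s).hasDerivAt.quadPolar a b c (hu₂ s).hasDerivAt (hu₁ s).hasDerivAt
      (hu₂ s).hasDerivAt using 1
    simp only [B, quadPolar]; ring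
  have hN : HasDerivAt (fun s => B (u₁ s) (u₂ s) (deriv u₁ s) (deriv u₂ s))
      (B (deriv u₁ t) (deriv u₂ t) (deriv u₁ t) (deriv u₂ t) - V t * q t) t := by
    convert (hu₁ t).hasDerivAt.quadPolar a b c (hu₂ t).hasDerivAt (hu₁' t).hasDerivAt
      (hu₂' t).hasDerivAt using 1
    simp only [B, q, quadPolar, eq_neg_of_add_eq_zero_left (hode₁ t),
      eq_neg_of_add_eq_zero_left (hode₂ t)]
    ring
  have hgram : q t * B (deriv u₁ t) (deriv u₂ t) (deriv u₁ t) (deriv u₂ t)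
      - B (u₁ t) (u₂ t) (deriv u₁ t) (deriv u₂ t) ^ 2 = 1 := by
    rw [show _ = _ from quadPolar_self_mul_self_sub_sq a b c _ _ _ _, hW, habc, inv_pow,
      inv_mul_cancel₀ (pow_ne_zero 2 hWne)]
  have hqt : 0 < q t := (hq_eq t).symm ▸ hpos t ht
  have hw' : w = fun s => √(q s) := funext fun s => (hq_eq s).symm ▸ hw s
  rw [hw', (hasDerivAt_deriv_sqrt (Eventually.of_forall hq) hN hqt).deriv]
  have hsq : √(q t) ^ 2 = q t := Real.sq_sqrt hqt.le
  have hne : √(q t) ≠ 0 := (Real.sqrt_pos.2 hqt).ne'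
  field_simp
  linear_combination hgram + V t * (√(q t) ^ 2 + q t) * hsq

/-- If `u₁, u₂` solve `u'' + V u = 0` with constant Wronskian `W ≠ 0` and
`a c - b² = W⁻²`, then `w = √(a u₁² + 2 b u₁ u₂ + c u₂²)` solves the
Ermakov-Pinney equation `w'' + V w = w⁻³` wherever the radicand is positive. -/
theorem ermakov_pinney_from_hill_solutions
    (V u₁ u₂ : ℝ → ℝ) (W a b c : ℝ)
    (hV : Continuous V)
    (hu₁ : Differentiable ℝ u₁) (hu₁' : Differentiable ℝ (deriv u₁))
    (hu₂ : Differentiable ℝ u₂) (hu₂' : Differentiable ℝ (deriv u₂))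
    (hode₁ : ∀ t, deriv (deriv u₁) t + V t * u₁ t = 0)
    (hode₂ : ∀ t, deriv (deriv u₂) t + V t * u₂ t = 0)
    (hW : ∀ t, u₁ t * deriv u₂ t - u₂ t * deriv u₁ t = W)
    (hWne : W ≠ 0)
    (habc : a * c - b ^ 2 = W⁻¹ ^ 2)
    (I : Set ℝ) (hI : IsOpen I)
    (hpos : ∀ t ∈ I, 0 < a * u₁ t ^ 2 + 2 * b * u₁ t * u₂ t + c * u₂ t ^ 2)
    (w : ℝ → ℝ)
    (hw : ∀ t, w t = Real.sqrt (a * u₁ t ^ 2 + 2 * b * u₁ t * u₂ t + c * u₂ t ^ 2)) :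
    ∀ t ∈ I, deriv (deriv w) t + V t * w t = (w t)⁻¹ ^ 3 :=
  ermakov_pinney_from_hill_solutions_general V u₁ u₂ W a b c hu₁ hu₁' hu₂ hu₂' hode₁ hode₂ hW hWne
    habc I hpos w hw
end

section
/- A function f satisfying the Virasoro stabilizer equation (1/2)f''' + 2V f' + V' f = 0 has the property that the quantity (1/2)f·f'' + V·f² - (1/4)(f')² is constant in t. -/
theorem hasDerivAt_stabilizer_firstIntegral {V f f₁ f₂ : ℝ → ℝ} {v a t : ℝ}
    (hV : HasDerivAt V v t) (hf : HasDerivAt f (f₁ t) t) (hf₁ : HasDerivAt f₁ (f₂ t) t)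
    (hf₂ : HasDerivAt f₂ a t) :
    HasDerivAt (fun s => (1/2) * f s * f₂ s + V s * f s ^ 2 - (1/4) * f₁ s ^ 2)
      (f t * ((1/2) * a + 2 * V t * f₁ t + v * f t)) t := by
  refine ((((hf.const_mul (1/2 : ℝ)).mul hf₂).add (hV.mul (hf.pow 2))).sub
    ((hf₁.pow 2).const_mul (1/4 : ℝ))).congr_deriv ?_
  simp only [Pi.pow_apply]
  push_cast
  ring

theorem stabilizer_equation_first_integral_general
    (V f : ℝ → ℝ)
    (hV : Differentiable ℝ V)
    (hf : Differentiable ℝ f) (hf' : Differentiable ℝ (deriv f))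
    (hf'' : Differentiable ℝ (deriv (deriv f)))
    (heq : ∀ t, (1/2) * deriv (deriv (deriv f)) t + 2 * V t * deriv f t
        + deriv V t * f t = 0) :
    ∀ t, (1/2) * f t * deriv (deriv f) t + V t * f t ^ 2
        - (1/4) * (deriv f t) ^ 2
      = (1/2) * f 0 * deriv (deriv f) 0 + V 0 * f 0 ^ 2
        - (1/4) * (deriv f 0) ^ 2 := by
  have hconst : ∀ s, HasDerivAt (fun s => (1/2) * f s * deriv (deriv f) s + V s * f s ^ 2
      - (1/4) * deriv f s ^ 2) 0 s := fun s => by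
    simpa only [heq s, mul_zero] using hasDerivAt_stabilizer_firstIntegral (hV s).hasDerivAt
      (hf s).hasDerivAt (hf' s).hasDerivAt (hf'' s).hasDerivAt
  exact fun t => is_const_of_deriv_eq_zero (fun s => (hconst s).differentiableAt)
    (fun s => (hconst s).deriv) t 0

/-- For a solution `f` of the Virasoro stabilizer equation
`(1/2) f''' + 2 V f' + V' f = 0`, the quantity
`(1/2) f f'' + V f² - (1/4) (f')²` is constant in `t`. -/
theorem stabilizer_equation_first_integral
    (V f : ℝ → ℝ)
    (hV : Differentiable ℝ V) (hV' : Continuous (deriv V))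
    (hf : Differentiable ℝ f) (hf' : Differentiable ℝ (deriv f))
    (hf'' : Differentiable ℝ (deriv (deriv f)))
    (heq : ∀ t, (1/2) * deriv (deriv (deriv f)) t + 2 * V t * deriv f t
        + deriv V t * f t = 0) :
    ∀ t, (1/2) * f t * deriv (deriv f) t + V t * f t ^ 2
        - (1/4) * (deriv f t) ^ 2
      = (1/2) * f 0 * deriv (deriv f) 0 + V 0 * f 0 ^ 2
        - (1/4) * (deriv f 0) ^ 2 :=
  stabilizer_equation_first_integral_general V f hV hf hf' hf'' heq
end

section
/- If u₁, u₂ are real solutions of u'' + V(t)u = 0 with V of period T and unit Wronskian, such that the monodromy in the basis (u₁,u₂) is a rotation by angle α (i.e. u₁(t+T) = cos α·u₁(t) - sin α·u₂(t) and u₂(t+T) = sin α·u₁(t) + cos α·u₂(t)), then, with θ(t) = ∫₀ᵗ ds/(u₁(s)²+u₂(s)²), one has θ(T) - θ(0) = α modulo 2π. -/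
open intervalIntegral in
/-- If the monodromy of `u'' + V u = 0` in a unit-Wronskian basis `(u₁, u₂)`
is rotation by angle `α`, then `∫₀ᵀ ds/(u₁² + u₂²) = α (mod 2π)`. -/
theorem elliptic_monodromy_angle_integral
    (T : ℝ) (hT : 0 < T)
    (V : ℝ → ℝ) (hV : Continuous V) (hVper : ∀ t, V (t + T) = V t)
    (u₁ u₂ : ℝ → ℝ)
    (hu₁ : Differentiable ℝ u₁) (hu₁' : Differentiable ℝ (deriv u₁))
    (hu₂ : Differentiable ℝ u₂) (hu₂' : Differentiable ℝ (deriv u₂))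
    (hode₁ : ∀ t, deriv (deriv u₁) t + V t * u₁ t = 0)
    (hode₂ : ∀ t, deriv (deriv u₂) t + V t * u₂ t = 0)
    (hW : ∀ t, u₁ t * deriv u₂ t - u₂ t * deriv u₁ t = 1)
    (α : ℝ)
    (hmon₁ : ∀ t, u₁ (t + T) = Real.cos α * u₁ t - Real.sin α * u₂ t)
    (hmon₂ : ∀ t, u₂ (t + T) = Real.sin α * u₁ t + Real.cos α * u₂ t)
    (hpos : ∀ t, 0 < u₁ t ^ 2 + u₂ t ^ 2) :
    ∃ k : ℤ, (∫ s in (0:ℝ)..T, (u₁ s ^ 2 + u₂ s ^ 2)⁻¹) = α + 2 * Real.pi * k := by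
  have hne : ∀ t, u₁ t ^ 2 + u₂ t ^ 2 ≠ 0 := fun t => (hpos t).ne'
  set f : ℝ → ℝ := fun s => (u₁ s ^ 2 + u₂ s ^ 2)⁻¹ with hf_def
  set p : ℝ → ℝ := fun s => (u₁ s * deriv u₁ s + u₂ s * deriv u₂ s) * f s with hp_def
  have hcf : Continuous f :=
    ((hu₁.continuous.pow 2).add (hu₂.continuous.pow 2)).inv₀ hne
  have hcp : Continuous p :=
    (((hu₁.continuous.mul hu₁'.continuous).add
      (hu₂.continuous.mul hu₂'.continuous))).mul hcf
  set g : ℝ → ℝ := fun t => ∫ s in (0:ℝ)..t, f s with hg_def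
  set ρ : ℝ → ℝ := fun t => ∫ s in (0:ℝ)..t, p s with hρ_def
  have hg : ∀ t, HasDerivAt g (f t) t := fun t =>
    intervalIntegral.integral_hasDerivAt_right (hcf.intervalIntegrable 0 t)
      hcf.aestronglyMeasurable.stronglyMeasurableAtFilter hcf.continuousAt
  have hρ : ∀ t, HasDerivAt ρ (p t) t := fun t =>
    intervalIntegral.integral_hasDerivAt_right (hcp.intervalIntegrable 0 t)
      hcp.aestronglyMeasurable.stronglyMeasurableAtFilter hcp.continuousAt
  set q : ℝ → ℂ := fun t => (ρ t : ℂ) + Complex.I * g t with hq_def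
  have hq : ∀ t, HasDerivAt q ((p t : ℂ) + Complex.I * f t) t := fun t =>
    ((hρ t).ofReal_comp).add (((hg t).ofReal_comp).const_mul Complex.I)
  set v : ℝ → ℂ := fun t => (u₁ t : ℂ) + Complex.I * u₂ t with hv_def
  have hv : ∀ t, HasDerivAt v ((Complex.ofReal (deriv u₁ t)) + Complex.I * deriv u₂ t) t := fun t =>
    (((hu₁ t).hasDerivAt).ofReal_comp).add
      ((((hu₂ t).hasDerivAt).ofReal_comp).const_mul Complex.I)
  set K : ℝ → ℂ := fun t => v t * Complex.exp (-(q t)) with hK_def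
  have hKd : ∀ t, HasDerivAt K 0 t := by
    intro t
    have hexp : HasDerivAt (fun t => Complex.exp (-(q t)))
        (Complex.exp (-(q t)) * (-((p t : ℂ) + Complex.I * f t))) t := (hq t).neg.cexp
    have hmul := (hv t).mul hexp
    refine hmul.congr_deriv ?_
    have hwC : (u₁ t : ℂ) * (Complex.ofReal (deriv u₂ t)) - (u₂ t : ℂ) * (Complex.ofReal (deriv u₁ t)) = 1 := by
      exact_mod_cast congrArg Complex.ofReal (hW t)
    have hfC : ((u₁ t : ℂ) ^ 2 + (u₂ t : ℂ) ^ 2) ≠ 0 := by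
      have := Complex.ofReal_ne_zero.2 (hne t)
      push_cast at this
      exact this
    have hfe : (f t : ℂ) = ((u₁ t : ℂ) ^ 2 + (u₂ t : ℂ) ^ 2)⁻¹ := by
      simp only [hf_def]
      push_cast
      ring
    have hpe : (p t : ℂ) = ((u₁ t : ℂ) * deriv u₁ t + (u₂ t : ℂ) * deriv u₂ t)
        * ((u₁ t : ℂ) ^ 2 + (u₂ t : ℂ) ^ 2)⁻¹ := by
      simp only [hp_def, hf_def]
      push_cast
      ring
    have hvq : ((Complex.ofReal (deriv u₁ t)) + Complex.I * deriv u₂ t)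
        = ((p t : ℂ) + Complex.I * f t) * v t := by
      rw [hfe, hpe, hv_def]
      field_simp
      linear_combination (Complex.I * (u₁ t : ℂ) - (u₂ t : ℂ)) * hwC - (u₂ t : ℂ) * Complex.I_sq
    rw [hvq]
    ring
  have hKconst : K T = K 0 := by
    have hdiff : Differentiable ℝ K := fun t => (hKd t).differentiableAt
    exact is_const_of_deriv_eq_zero hdiff (fun t => (hKd t).deriv) T 0
  have hq0 : q 0 = 0 := by simp [hq_def, hρ_def, hg_def]
  have hv0 : v 0 ≠ 0 := by
    intro h
    have h1 : u₁ 0 = 0 := by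
      have := congrArg Complex.re h
      simpa [hv_def] using this
    have h2 : u₂ 0 = 0 := by
      have := congrArg Complex.im h
      simpa [hv_def] using this
    nlinarith [hpos 0]
  have hvT : v T = Complex.exp ((α : ℂ) * Complex.I) * v 0 := by
    have h1 := hmon₁ 0
    have h2 := hmon₂ 0
    rw [zero_add] at h1 h2
    simp only [hv_def, h1, h2, Complex.exp_mul_I]
    push_cast [Complex.ofReal_cos, Complex.ofReal_sin]
    rw [← Complex.ofReal_cos, ← Complex.ofReal_sin]
    linear_combination (-((Real.sin α : ℂ) * (u₂ 0 : ℂ))) * Complex.I_sq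
  have hKe : Complex.exp ((α : ℂ) * Complex.I) * v 0 * Complex.exp (-(q T)) = v 0 := by
    have := hKconst
    simp only [hK_def, hq0, neg_zero, Complex.exp_zero, mul_one] at this
    rw [hvT] at this
    exact this
  have h3 : (Complex.exp ((α : ℂ) * Complex.I) * Complex.exp (-(q T))) * v 0
      = 1 * v 0 := by
    rw [one_mul]
    linear_combination hKe
  have h4 : Complex.exp ((α : ℂ) * Complex.I + -(q T)) = 1 := by
    rw [Complex.exp_add]
    exact mul_right_cancel₀ hv0 h3
  obtain ⟨n, hn⟩ := Complex.exp_eq_one_iff.mp h4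
  refine ⟨-n, ?_⟩
  have him := congrArg Complex.im hn
  simp [hq_def, Complex.add_im, Complex.mul_im, Complex.mul_re] at him
  push_cast at him ⊢
  show g T = _
  linarith
end
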